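/- arXiv:2503.11104 — 4 statements merged into one kernel-verified Lean document; each statement's English description precedes it below -/
import Mathlib

section
/- Let W be a real symmetric m×m matrix with -I ≺ W ⪯ I and null(I - W) = span{1_m}, and let V = θI + (1-θ)W with θ ∈ (0, 1/2]. Define the 2m×2m matrix P = [[W - (1/m)1 1ᵀ, I_m], [W - V, I_m - (1/m)1 1ᵀ]]. Then every eigenvalue λ of P satisfies |λ| < 1. -/
/-!
Let `(x, y)` be an eigenvector of `P` for an eigenvalue `λ ≠ 0`. Since `1ᵀW = 1ᵀ`, the
functionals `u₁ (x, y) = 1ᵀx` and `u₂ (x, y) = 1ᵀy` satisfy `u₁ ∘ P = u₂` and `u₂ ∘ P = 0`, so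
both vanish on the eigenvector and the averaging terms drop out. Eliminating `y = λx - Wx` and
pairing with `x̄` leaves `λ² - (1 + μ)λ + θ + (1 - θ)μ = 0` for the Rayleigh quotient
`μ = x̄ᵀWx / x̄ᵀx`. The hypotheses on `W`, together with `1ᵀx = 0`, put `μ` in `(-1, 1)`; for such
`μ` and `0 < θ < 1` this real quadratic satisfies the Schur–Cohn conditions, so both of its roots
lie in the open unit disc.
-/

open Matrix
open scoped MatrixOrder ComplexOrder

theorem Complex.norm_lt_one_of_sq_sub_mul_add_eq_zero {s c : ℝ} {z : ℂ} (hc : c < 1)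
    (hs : |s| < 1 + c) (hz : z ^ 2 - s * z + c = 0) : ‖z‖ < 1 := by
  have hre : z.re ^ 2 - z.im ^ 2 - s * z.re + c = 0 := by
    simpa [sq] using congrArg Complex.re hz
  have him : z.im * (2 * z.re - s) = 0 := by
    have := congrArg Complex.im hz
    simp only [sq, Complex.add_im, Complex.sub_im, Complex.mul_im, Complex.ofReal_re,
      Complex.ofReal_im, zero_mul, add_zero, Complex.zero_im] at this
    linarith
  have hs' := abs_lt.mp hs
  rw [← sq_lt_one_iff₀ (norm_nonneg z), Complex.sq_norm, Complex.normSq_apply]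
  rcases mul_eq_zero.mp him with hb | ha
  · rw [hb] at hre ⊢
    have h1 : z.re < 1 := by nlinarith
    have h2 : -1 < z.re := by nlinarith
    nlinarith
  · nlinarith

namespace Matrix

variable {n 𝕜 : Type*} [Fintype n] [RCLike 𝕜]

theorem PosSemidef.map_algebraMap {A : Matrix n n ℝ} (hA : A.PosSemidef) :
    (A.map (algebraMap ℝ 𝕜)).PosSemidef := by
  classical
  obtain ⟨B, rfl⟩ := CStarAlgebra.nonneg_iff_eq_star_mul_self.mp hA.nonneg
  rw [star_eq_conjTranspose, Matrix.map_mul, conjTranspose_map _ (fun _ => by simp)]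
  exact posSemidef_conjTranspose_mul_self _

theorem PosDef.map_algebraMap [DecidableEq n] {A : Matrix n n ℝ} (hA : A.PosDef) :
    (A.map (algebraMap ℝ 𝕜)).PosDef := by
  rw [hA.posSemidef.map_algebraMap.posDef_iff_det_ne_zero, ← RingHom.mapMatrix_apply,
    ← RingHom.map_det]
  simpa using hA.det_pos.ne'

theorem re_map_algebraMap_mulVec (A : Matrix n n ℝ) (x : n → 𝕜) (i : n) :
    RCLike.re ((A.map (algebraMap ℝ 𝕜) *ᵥ x) i) = (A *ᵥ fun j => RCLike.re (x j)) i := by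
  simp [mulVec, dotProduct]

theorem im_map_algebraMap_mulVec (A : Matrix n n ℝ) (x : n → 𝕜) (i : n) :
    RCLike.im ((A.map (algebraMap ℝ 𝕜) *ᵥ x) i) = (A *ᵥ fun j => RCLike.im (x j)) i := by
  simp [mulVec, dotProduct]

theorem exists_eq_const_of_map_algebraMap_mulVec_eq_zero {A : Matrix n n ℝ}
    (hA : ∀ v : n → ℝ, A *ᵥ v = 0 → ∃ c : ℝ, v = fun _ => c) {x : n → 𝕜}
    (hx : A.map (algebraMap ℝ 𝕜) *ᵥ x = 0) : ∃ c : 𝕜, x = fun _ => c := by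
  obtain ⟨a, ha⟩ := hA (fun j => RCLike.re (x j))
    (funext fun i => by simp [← re_map_algebraMap_mulVec, hx])
  obtain ⟨b, hb⟩ := hA (fun j => RCLike.im (x j))
    (funext fun i => by simp [← im_map_algebraMap_mulVec, hx])
  refine ⟨a + b * RCLike.I, funext fun i => ?_⟩
  rw [← RCLike.re_add_im (x i), congrFun ha i, congrFun hb i]

theorem IsSymm.one_vecMul_map_algebraMap {A : Matrix n n ℝ} (hA : A.IsSymm) (h : A *ᵥ 1 = 1) :
    (1 : n → 𝕜) ᵥ* A.map (algebraMap ℝ 𝕜) = 1 := by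
  have h' : 1 ᵥ* A = 1 := by rw [← hA.eq, vecMul_transpose, h]
  funext j
  simpa [h'] using (RingHom.map_vecMul (algebraMap ℝ 𝕜) A 1 j).symm

theorem exists_rayleigh_quotient_mem_Ioo [DecidableEq n] {W : Matrix n n ℝ}
    (hlow : (W + 1).PosDef) (hup : (1 - W).PosSemidef)
    (hnull : ∀ v : n → ℝ, (1 - W) *ᵥ v = 0 → ∃ c : ℝ, v = fun _ => c)
    {x : n → 𝕜} (hx : x ≠ 0) (hsum : ∑ i, x i = 0) :
    ∃ μ ∈ Set.Ioo (-1 : ℝ) 1,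
      star x ⬝ᵥ (W.map (algebraMap ℝ 𝕜) *ᵥ x) = μ * (star x ⬝ᵥ x) := by
  set N := star x ⬝ᵥ x
  set Q := star x ⬝ᵥ (W.map (algebraMap ℝ 𝕜) *ᵥ x)
  have hN : 0 < N := dotProduct_star_self_pos_iff.mpr hx
  have hlow' : 0 < Q + N := by
    simpa [Matrix.map_add, add_mulVec, dotProduct_add, Q, N]
      using (hlow.map_algebraMap (𝕜 := 𝕜)).dotProduct_mulVec_pos hx
  have hup' : 0 < N - Q := by
    have hle : 0 ≤ star x ⬝ᵥ ((1 - W).map (algebraMap ℝ 𝕜) *ᵥ x) :=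
      hup.map_algebraMap.dotProduct_mulVec_nonneg x
    have hne : star x ⬝ᵥ ((1 - W).map (algebraMap ℝ 𝕜) *ᵥ x) ≠ 0 := by
      rw [Ne, hup.map_algebraMap.dotProduct_mulVec_zero_iff]
      intro hker
      obtain ⟨c, rfl⟩ := exists_eq_const_of_map_algebraMap_mulVec_eq_zero hnull hker
      refine hN.ne' ?_
      simp only [N, dotProduct, Pi.star_apply, ← Finset.mul_sum, hsum, mul_zero]
    simpa [Matrix.map_sub, sub_mulVec, dotProduct_sub, Q, N] using lt_of_le_of_ne hle hne.symm
  rw [RCLike.pos_iff] at hN hlow' hup'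
  simp only [map_add, map_sub] at hlow' hup'
  refine ⟨RCLike.re Q / RCLike.re N, ⟨?_, ?_⟩, ?_⟩
  · rw [lt_div_iff₀ hN.1]; linarith
  · rw [div_lt_one hN.1]; linarith
  · have hNr : N = (RCLike.re N : 𝕜) := RCLike.ext (by simp) (by simp [hN.2])
    have hQr : Q = (RCLike.re Q : 𝕜) := RCLike.ext (by simp) (by rw [RCLike.ofReal_im]; linarith)
    calc Q = (RCLike.re Q : 𝕜) := hQr
      _ = ((RCLike.re Q / RCLike.re N : ℝ) : 𝕜) * (RCLike.re N : 𝕜) := by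
        rw [← RCLike.ofReal_mul, div_mul_cancel₀ _ hN.1.ne']
      _ = _ := by rw [← hNr]

end Matrix

theorem Matrix.exists_fromBlocks_eigenvector {K m n : Type*} [Field K] [Fintype m] [Fintype n]
    [DecidableEq m] [DecidableEq n] {A : Matrix m m K} {B : Matrix m n K} {C : Matrix n m K}
    {D : Matrix n n K} {lam : K} (h : (fromBlocks A B C D).charpoly.IsRoot lam) :
    ∃ x y, (x ≠ 0 ∨ y ≠ 0) ∧ A *ᵥ x + B *ᵥ y = lam • x ∧ C *ᵥ x + D *ᵥ y = lam • y := by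
  rw [← charpoly_toLin', ← Module.End.hasEigenvalue_iff_isRoot_charpoly] at h
  obtain ⟨v, hv⟩ := h.exists_hasEigenvector
  have hMv := hv.apply_eq_smul
  rw [toLin'_apply, fromBlocks_mulVec] at hMv
  refine ⟨v ∘ Sum.inl, v ∘ Sum.inr, ?_, ?_, ?_⟩
  · by_contra! h0
    exact hv.2 (funext fun i => by cases i; exacts [congrFun h0.1 _, congrFun h0.2 _])
  · funext i; simpa using congrFun hMv (Sum.inl i)
  · funext i; simpa using congrFun hMv (Sum.inr i)

theorem sum_eq_zero_of_fromBlocks_eigenvector {K n : Type*} [Field K] [Fintype n]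
    {A C D : Matrix n n K} (hA : 1 ᵥ* A = 0) (hC : 1 ᵥ* C = 0) (hD : 1 ᵥ* D = 0)
    {lam : K} (hlam : lam ≠ 0) {x y : n → K}
    (h₁ : A *ᵥ x + y = lam • x) (h₂ : C *ᵥ x + D *ᵥ y = lam • y) :
    ∑ i, x i = 0 ∧ ∑ i, y i = 0 := by
  have e₁ := congrArg (1 ⬝ᵥ ·) h₁
  have e₂ := congrArg (1 ⬝ᵥ ·) h₂
  simp only [dotProduct_add, dotProduct_smul, dotProduct_mulVec, hA, hC, hD, zero_dotProduct,
    one_dotProduct, smul_eq_mul, zero_add] at e₁ e₂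
  have hy : ∑ i, y i = 0 := (mul_eq_zero.mp e₂.symm).resolve_left hlam
  exact ⟨(mul_eq_zero.mp (e₁.symm.trans hy)).resolve_left hlam, hy⟩

theorem sq_sub_mul_add_eq_zero_of_rayleigh_quotient {n 𝕜 : Type*} [Fintype n] [DecidableEq n]
    [RCLike 𝕜] {W : Matrix n n 𝕜} {x y : n → 𝕜} {lam : 𝕜} {θ μ : ℝ} (hx : x ≠ 0)
    (h₁ : W *ᵥ x + y = lam • x) (h₂ : (θ : 𝕜) • ((W - 1) *ᵥ x) + y = lam • y)
    (hμ : star x ⬝ᵥ (W *ᵥ x) = μ * (star x ⬝ᵥ x)) :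
    lam ^ 2 - ((1 + μ : ℝ) : 𝕜) * lam + ((μ + θ * (1 - μ) : ℝ) : 𝕜) = 0 := by
  have hN : star x ⬝ᵥ x ≠ 0 := (dotProduct_star_self_pos_iff.mpr hx).ne'
  have e₁ := congrArg (star x ⬝ᵥ ·) h₁
  have e₂ := congrArg (star x ⬝ᵥ ·) h₂
  simp only [dotProduct_add, dotProduct_smul, sub_mulVec, one_mulVec, dotProduct_sub,
    smul_eq_mul, hμ] at e₁ e₂
  refine (mul_eq_zero.mp ?_).resolve_right hN
  push_cast
  linear_combination -e₂ - (lam - 1) * e₁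

def averagingMatrix (m : ℕ) (K : Type*) [Field K] : Matrix (Fin m) (Fin m) K :=
  (m : K)⁻¹ • of fun _ _ => 1

theorem one_vecMul_averagingMatrix {K : Type*} [Field K] [CharZero K] (m : ℕ) :
    (1 : Fin m → K) ᵥ* averagingMatrix m K = 1 := by
  funext j
  have : (m : K) ≠ 0 := Nat.cast_ne_zero.mpr j.pos.ne'
  simp [averagingMatrix, vecMul, dotProduct, this]

theorem averagingMatrix_mulVec_of_sum_eq_zero {K : Type*} [Field K] {m : ℕ} {z : Fin m → K}
    (hz : ∑ i, z i = 0) : averagingMatrix m K *ᵥ z = 0 := by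
  funext i
  simp [averagingMatrix, mulVec, dotProduct, ← Finset.mul_sum, hz]

theorem averagingMatrix_map_ofReal (m : ℕ) :
    (averagingMatrix m ℝ).map ((↑) : ℝ → ℂ) = averagingMatrix m ℂ := by
  ext i j
  simp [averagingMatrix]

theorem stmt_3_general {m : ℕ} (W : Matrix (Fin m) (Fin m) ℝ) (θ : ℝ)
    (hW : W.IsSymm)
    (hlow : (W + 1).PosDef) (hup : ((1 : Matrix (Fin m) (Fin m) ℝ) - W).PosSemidef)
    (hnull : ∀ v : Fin m → ℝ, ((1 : Matrix (Fin m) (Fin m) ℝ) - W) *ᵥ v = 0 ↔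
      ∃ c : ℝ, v = fun _ => c)
    (hθ0 : 0 < θ) (hθ1 : θ ≤ 1/2)
    (V : Matrix (Fin m) (Fin m) ℝ)
    (hV : V = θ • (1 : Matrix (Fin m) (Fin m) ℝ) + (1 - θ) • W)
    (P : Matrix (Fin (m + m)) (Fin (m + m)) ℝ)
    (hP : P = Matrix.reindex finSumFinEquiv finSumFinEquiv
      (Matrix.fromBlocks
        (W - (m : ℝ)⁻¹ • Matrix.of (fun _ _ => (1 : ℝ))) 1
        (W - V) (1 - (m : ℝ)⁻¹ • Matrix.of (fun _ _ => (1 : ℝ)))))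
    (lam : ℂ) (hlam : (P.map (algebraMap ℝ ℂ)).charpoly.IsRoot lam) :
    ‖lam‖ < 1 := by
  rcases eq_or_ne lam 0 with rfl | hlam0
  · simp
  set Wc := W.map (algebraMap ℝ ℂ)
  set J := averagingMatrix m ℂ
  have hPc : P.map (algebraMap ℝ ℂ) = reindex finSumFinEquiv finSumFinEquiv
      (fromBlocks (Wc - J) 1 ((θ : ℂ) • (Wc - 1)) (1 - J)) := by
    have hVW : W - V = θ • (W - 1) := by rw [hV]; module
    rw [hP, hVW, ← averagingMatrix, reindex_apply, reindex_apply, ← submatrix_map, fromBlocks_map]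
    simp [Wc, J, Matrix.map_sub, Matrix.map_smul, Matrix.map_one, averagingMatrix_map_ofReal]
  have hWc : (1 : Fin m → ℂ) ᵥ* Wc = 1 := hW.one_vecMul_map_algebraMap
    (sub_eq_zero.mp (by simpa [sub_mulVec] using (hnull 1).mpr ⟨1, rfl⟩)).symm
  rw [hPc, charpoly_reindex] at hlam
  obtain ⟨x, y, hxy, h₁, h₂⟩ := exists_fromBlocks_eigenvector hlam
  rw [one_mulVec] at h₁
  obtain ⟨hx, hy⟩ := sum_eq_zero_of_fromBlocks_eigenvector
    (by simp [vecMul_sub, hWc, J, one_vecMul_averagingMatrix])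
    (by simp [vecMul_smul, vecMul_sub, hWc]) (by simp [vecMul_sub, J, one_vecMul_averagingMatrix])
    hlam0 h₁ h₂
  rw [sub_mulVec, averagingMatrix_mulVec_of_sum_eq_zero hx, sub_zero] at h₁
  rw [sub_mulVec, averagingMatrix_mulVec_of_sum_eq_zero hy, sub_zero, one_mulVec,
    smul_mulVec] at h₂
  have hx0 : x ≠ 0 := by
    rintro rfl
    exact hxy.elim (· rfl) (· (by simpa using h₁))
  obtain ⟨μ, ⟨hμ₁, hμ₂⟩, hμ⟩ :=
    exists_rayleigh_quotient_mem_Ioo hlow hup (fun v => (hnull v).mp) hx0 hx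
  refine Complex.norm_lt_one_of_sq_sub_mul_add_eq_zero (s := 1 + μ) (c := μ + θ * (1 - μ))
    ?_ ?_ (sq_sub_mul_add_eq_zero_of_rayleigh_quotient hx0 h₁ h₂ hμ)
  · nlinarith
  · rw [abs_lt]; constructor <;> nlinarith

/-- Lemma 1: every eigenvalue of the EXTRA consensus-error matrix P has magnitude < 1. -/
theorem stmt_3 {m : ℕ} (hm : 0 < m) (W : Matrix (Fin m) (Fin m) ℝ) (θ : ℝ)
    (hW : W.IsSymm)
    (hlow : (W + 1).PosDef) (hup : ((1 : Matrix (Fin m) (Fin m) ℝ) - W).PosSemidef)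
    (hnull : ∀ v : Fin m → ℝ, ((1 : Matrix (Fin m) (Fin m) ℝ) - W) *ᵥ v = 0 ↔
      ∃ c : ℝ, v = fun _ => c)
    (hθ0 : 0 < θ) (hθ1 : θ ≤ 1/2)
    (V : Matrix (Fin m) (Fin m) ℝ)
    (hV : V = θ • (1 : Matrix (Fin m) (Fin m) ℝ) + (1 - θ) • W)
    (P : Matrix (Fin (m + m)) (Fin (m + m)) ℝ)
    (hP : P = Matrix.reindex finSumFinEquiv finSumFinEquiv
      (Matrix.fromBlocks
        (W - (m : ℝ)⁻¹ • Matrix.of (fun _ _ => (1 : ℝ))) 1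
        (W - V) (1 - (m : ℝ)⁻¹ • Matrix.of (fun _ _ => (1 : ℝ)))))
    (lam : ℂ) (hlam : (P.map (algebraMap ℝ ℂ)).charpoly.IsRoot lam) :
    ‖lam‖ < 1 :=
  stmt_3_general W θ hW hlow hup hnull hθ0 hθ1 V hV P hP lam hlam
end

section
/- Let W be a real symmetric m×m matrix with null(I - W) = span{1_m}, and let V = θI + (1-θ)W with θ ∈ (0, 1/2]. If v = [v₁ᵀ, v₂ᵀ]ᵀ ∈ R^{2m} satisfies [[W, I],[W - V, I]] v = v, then v₁ ∈ span{1_m} and v₂ = 0. -/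
open Matrix

section

variable {n R : Type*} [DecidableEq n] [CommRing R]

theorem sub_smul_one_add_smul_eq (W : Matrix n n R) (θ : R) :
    W - (θ • (1 : Matrix n n R) + (1 - θ) • W) = (-θ) • (1 - W) := by
  module

variable [Fintype n]

theorem eq_one_sub_mulVec_of_mulVec_add_eq {W : Matrix n n R} {v₁ v₂ : n → R}
    (h : W *ᵥ v₁ + v₂ = v₁) : v₂ = (1 - W) *ᵥ v₁ := by
  rw [sub_mulVec, one_mulVec]
  exact eq_sub_of_add_eq' h

theorem one_sub_mulVec_eq_zero_of_sub_mulVec_eq_zero [IsDomain R]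
    {W : Matrix n n R} {θ : R} (hθ : θ ≠ 0) {v : n → R}
    (h : (W - (θ • (1 : Matrix n n R) + (1 - θ) • W)) *ᵥ v = 0) :
    (1 - W) *ᵥ v = 0 := by
  rw [sub_smul_one_add_smul_eq, smul_mulVec, smul_eq_zero] at h
  exact h.resolve_left (neg_ne_zero.mpr hθ)

end

theorem stmt_4_general {m : ℕ} (W : Matrix (Fin m) (Fin m) ℝ) (θ : ℝ)
    (hnull : ∀ v : Fin m → ℝ, ((1 : Matrix (Fin m) (Fin m) ℝ) - W) *ᵥ v = 0 ↔
      ∃ c : ℝ, v = fun _ => c)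
    (hθ0 : 0 < θ)
    (V : Matrix (Fin m) (Fin m) ℝ)
    (hV : V = θ • (1 : Matrix (Fin m) (Fin m) ℝ) + (1 - θ) • W)
    (v₁ v₂ : Fin m → ℝ)
    (h1 : W *ᵥ v₁ + v₂ = v₁)
    (h2 : (W - V) *ᵥ v₁ + v₂ = v₂) :
    (∃ c : ℝ, v₁ = fun _ => c) ∧ v₂ = 0 := by
  subst hV
  have hker : (1 - W) *ᵥ v₁ = 0 :=
    one_sub_mulVec_eq_zero_of_sub_mulVec_eq_zero hθ0.ne' (add_eq_right.mp h2)
  exact ⟨(hnull v₁).mp hker, (eq_one_sub_mulVec_of_mulVec_add_eq h1).trans hker⟩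

/-- The eigenspace of the eigenvalue 1 of the EXTRA block matrix M = [[W,I],[W-V,I]]. -/
theorem stmt_4 {m : ℕ} (W : Matrix (Fin m) (Fin m) ℝ) (θ : ℝ)
    (hW : W.IsSymm)
    (hnull : ∀ v : Fin m → ℝ, ((1 : Matrix (Fin m) (Fin m) ℝ) - W) *ᵥ v = 0 ↔
      ∃ c : ℝ, v = fun _ => c)
    (hθ0 : 0 < θ) (hθ1 : θ ≤ 1/2)
    (V : Matrix (Fin m) (Fin m) ℝ)
    (hV : V = θ • (1 : Matrix (Fin m) (Fin m) ℝ) + (1 - θ) • W)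
    (v₁ v₂ : Fin m → ℝ)
    (h1 : W *ᵥ v₁ + v₂ = v₁)
    (h2 : (W - V) *ᵥ v₁ + v₂ = v₂) :
    (∃ c : ℝ, v₁ = fun _ => c) ∧ v₂ = 0 :=
  stmt_4_general W θ hnull hθ0 V hV v₁ v₂ h1 h2
end

section
/- Let G : R^N → R be differentiable with L-Lipschitz gradient, let 0 < α ≤ 1/L, and let x⁺ = x - α∇G(x) - αΔ where Δ ∈ R^N satisfies ‖Δ‖ ≤ L·e for some e ≥ 0. Then G(x⁺) - G(x) ≤ -(α/4)‖∇G(x)‖² + ((L³α²)/2 + L²α) e². -/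
/-!
The descent lemma for an `L`-smooth function, applied to the step `-α (∇G x + Δ)`, gives
`G x⁺ - G x ≤ -α ⟪∇G x, ∇G x + Δ⟫ + (L α² / 2) ‖∇G x + Δ‖²`. Since `L α ≤ 1` the quadratic
coefficient is at most `α / 2`, and completing the square leaves `(α / 2) (‖Δ‖² - ‖∇G x‖²)`,
which is already sharper than the claimed bound once `‖Δ‖ ≤ L e`.
-/

open RealInnerProductSpace

section Descent

variable {E : Type*} [NormedAddCommGroup E] [InnerProductSpace ℝ E] [CompleteSpace E]
  {G : E → ℝ} {L : ℝ}

theorem hasDerivAt_comp_add_smul (hdiff : Differentiable ℝ G) (x v : E) (t : ℝ) :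
    HasDerivAt (fun s : ℝ => G (x + s • v)) ⟪gradient G (x + t • v), v⟫ t := by
  have hline : HasDerivAt (fun s : ℝ => x + s • v) v t := by
    simpa using ((hasDerivAt_id t).smul_const v).const_add x
  simpa [InnerProductSpace.toDual_apply_apply, Function.comp_def] using
    (hdiff (x + t • v)).hasGradientAt.hasFDerivAt.comp_hasDerivAt t hline

theorem inner_gradient_add_smul_sub_le
    (hlip : ∀ x y, ‖gradient G x - gradient G y‖ ≤ L * ‖x - y‖) (x v : E) {t : ℝ}
    (ht : 0 ≤ t) :
    ⟪gradient G (x + t • v) - gradient G x, v⟫ ≤ L * t * ‖v‖ ^ 2 :=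
  calc ⟪gradient G (x + t • v) - gradient G x, v⟫
      ≤ ‖gradient G (x + t • v) - gradient G x‖ * ‖v‖ := real_inner_le_norm _ _
    _ ≤ L * ‖(x + t • v) - x‖ * ‖v‖ := by gcongr; exact hlip _ _
    _ = L * t * ‖v‖ ^ 2 := by
      rw [add_sub_cancel_left, norm_smul, Real.norm_of_nonneg ht]
      ring

theorem image_add_le_of_lipschitz_gradient (hdiff : Differentiable ℝ G)
    (hlip : ∀ x y, ‖gradient G x - gradient G y‖ ≤ L * ‖x - y‖) (x v : E) :
    G (x + v) ≤ G x + ⟪gradient G x, v⟫ + L / 2 * ‖v‖ ^ 2 := by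
  set ψ : ℝ → ℝ := fun t => G (x + t • v) - t * ⟪gradient G x, v⟫ - t ^ 2 * (L / 2 * ‖v‖ ^ 2)
  have hψ : ∀ t, HasDerivAt ψ (⟪gradient G (x + t • v), v⟫ - ⟪gradient G x, v⟫
      - 2 * t * (L / 2 * ‖v‖ ^ 2)) t := fun t => by
    have hlin : HasDerivAt (fun s : ℝ => s * ⟪gradient G x, v⟫) ⟪gradient G x, v⟫ t := by
      simpa using (hasDerivAt_id t).mul_const ⟪gradient G x, v⟫
    have hquad : HasDerivAt (fun s : ℝ => s ^ 2 * (L / 2 * ‖v‖ ^ 2))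
        (2 * t * (L / 2 * ‖v‖ ^ 2)) t := by
      simpa using (hasDerivAt_pow 2 t).mul_const (L / 2 * ‖v‖ ^ 2)
    exact ((hasDerivAt_comp_add_smul hdiff x v t).sub hlin).sub hquad
  have hanti : AntitoneOn ψ (Set.Icc 0 1) := by
    refine antitoneOn_of_deriv_nonpos (convex_Icc 0 1)
      (fun t _ => (hψ t).continuousAt.continuousWithinAt)
      (fun t _ => (hψ t).differentiableAt.differentiableWithinAt) fun t ht => ?_
    rw [interior_Icc] at ht
    have hinner := inner_gradient_add_smul_sub_le hlip x v ht.1.le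
    rw [inner_sub_left] at hinner
    rw [(hψ t).deriv]
    linarith
  have h01 := hanti (Set.left_mem_Icc.2 zero_le_one) (Set.right_mem_Icc.2 zero_le_one) zero_le_one
  simp only [ψ, one_smul, zero_smul, add_zero, one_pow, one_mul, zero_mul, sub_zero,
    ne_eq, OfNat.ofNat_ne_zero, not_false_eq_true, zero_pow] at h01
  linarith

theorem image_sub_smul_le_of_lipschitz_gradient (hdiff : Differentiable ℝ G)
    (hlip : ∀ x y, ‖gradient G x - gradient G y‖ ≤ L * ‖x - y‖) {α : ℝ} (hα : 0 ≤ α)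
    (hLα : L * α ≤ 1) (x w : E) :
    G (x - α • w) ≤ G x + α / 2 * (‖w - gradient G x‖ ^ 2 - ‖gradient G x‖ ^ 2) := by
  have hdescent := image_add_le_of_lipschitz_gradient hdiff hlip x (-(α • w))
  rw [← sub_eq_add_neg, inner_neg_right, real_inner_smul_right, norm_neg, norm_smul,
    Real.norm_of_nonneg hα] at hdescent
  have hquad : L / 2 * (α * ‖w‖) ^ 2 ≤ α / 2 * ‖w‖ ^ 2 := by
    have : L * α * α ≤ 1 * α := mul_le_mul_of_nonneg_right hLα hα
    nlinarith [sq_nonneg ‖w‖]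
  rw [norm_sub_sq_real, real_inner_comm]
  linarith

end Descent

theorem stmt_9_general {N : ℕ} (G : EuclideanSpace ℝ (Fin N) → ℝ) (L α e : ℝ)
    (hL : 0 < L) (hdiff : Differentiable ℝ G)
    (hlip : ∀ x y, ‖gradient G x - gradient G y‖ ≤ L * ‖x - y‖)
    (hα0 : 0 < α) (hα1 : α ≤ 1 / L)
    (x : EuclideanSpace ℝ (Fin N)) (Δ : EuclideanSpace ℝ (Fin N))
    (hΔ : ‖Δ‖ ≤ L * e) :
    G (x - α • gradient G x - α • Δ) - G x ≤
      -(α / 4) * ‖gradient G x‖^2 + ((L^3 * α^2) / 2 + L^2 * α) * e^2 := by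
  have hLα : L * α ≤ 1 := by rwa [le_div_iff₀ hL, mul_comm] at hα1
  have hstep := image_sub_smul_le_of_lipschitz_gradient hdiff hlip hα0.le hLα x
    (gradient G x + Δ)
  rw [add_sub_cancel_left, smul_add, ← sub_sub] at hstep
  have hΔsq : ‖Δ‖ ^ 2 ≤ L ^ 2 * e ^ 2 := by
    rw [← mul_pow]; exact pow_le_pow_left₀ (norm_nonneg Δ) hΔ 2
  have hslack : 0 ≤ L ^ 3 * α ^ 2 / 2 * e ^ 2 := by positivity
  nlinarith [sq_nonneg ‖gradient G x‖]

/-- Inexact gradient-descent decrease lemma for the averaged EXTRA iterate. -/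
theorem stmt_9 {N : ℕ} (G : EuclideanSpace ℝ (Fin N) → ℝ) (L α e : ℝ)
    (hL : 0 < L) (hdiff : Differentiable ℝ G)
    (hlip : ∀ x y, ‖gradient G x - gradient G y‖ ≤ L * ‖x - y‖)
    (hα0 : 0 < α) (hα1 : α ≤ 1 / L) (he : 0 ≤ e)
    (x : EuclideanSpace ℝ (Fin N)) (Δ : EuclideanSpace ℝ (Fin N))
    (hΔ : ‖Δ‖ ≤ L * e) :
    G (x - α • gradient G x - α • Δ) - G x ≤
      -(α / 4) * ‖gradient G x‖^2 + ((L^3 * α^2) / 2 + L^2 * α) * e^2 :=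
  stmt_9_general G L α e hL hdiff hlip hα0 hα1 x Δ hΔ
end

section
/- Let W be a real symmetric m×m matrix with -I ≺ W ⪯ I and V = θI + (1-θ)W with θ ∈ (0,1/2]. For ω an eigenvalue of W with ω ≠ 1, both roots of λ² - (1+ω)λ + (ω(1-θ) + θ) = 0 (real or complex) have modulus strictly less than 1; if ω = 1, the only root of the corresponding factor (counting the Schur-complement reduction of [[W,I],[W-V,I]]) is λ = 1. -/
/-!
An eigenvalue `ω` of `W` lies in `(-1, 1]`, because `W + 1` is positive definite and `1 - W`
positive semidefinite. For `ω < 1` the quadratic `z² - (1 + ω) z + (ω (1 - θ) + θ)` satisfies the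
Schur–Cohn (Jury) conditions `|c| < 1`, `|b| < 1 + c`, so both of its roots lie in the open unit
disc; for `ω = 1` it is `(z - 1)²`.
-/

open Matrix

namespace Matrix

variable {n : Type*} [Fintype n] {A : Matrix n n ℝ} {v : n → ℝ} {μ : ℝ}

theorem PosDef.pos_of_mulVec_eq_smul (hA : A.PosDef) (hv : v ≠ 0) (hAv : A *ᵥ v = μ • v) :
    0 < μ := by
  have hpos := hA.dotProduct_mulVec_pos hv
  rw [hAv, star_trivial, dotProduct_smul, smul_eq_mul] at hpos
  exact pos_of_mul_pos_left hpos (dotProduct_self_star_nonneg v)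

theorem PosSemidef.nonneg_of_mulVec_eq_smul (hA : A.PosSemidef) (hv : v ≠ 0)
    (hAv : A *ᵥ v = μ • v) : 0 ≤ μ := by
  have hnonneg := hA.dotProduct_mulVec_nonneg v
  rw [hAv, star_trivial, dotProduct_smul, smul_eq_mul] at hnonneg
  have hvv : 0 < v ⬝ᵥ v := dotProduct_self_star_pos_iff.mpr hv
  exact nonneg_of_mul_nonneg_left hnonneg hvv

end Matrix

theorem Complex.norm_lt_one_of_sq_add_mul_add_eq_zero {b c : ℝ} (hc : |c| < 1)
    (hb : |b| < 1 + c) {z : ℂ} (hz : z ^ 2 + b * z + c = 0) : ‖z‖ < 1 := by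
  have hre : z.re * z.re - z.im * z.im + b * z.re + c = 0 := by
    simpa [pow_two] using congrArg Complex.re hz
  have him : z.im * (2 * z.re + b) = 0 := by
    have := congrArg Complex.im hz
    simp only [pow_two, Complex.add_im, Complex.mul_im, Complex.ofReal_re, Complex.ofReal_im,
      Complex.zero_im] at this
    linear_combination this
  rw [abs_lt] at hc hb
  suffices hsq : z.re * z.re + z.im * z.im < 1 by
    rw [← Complex.normSq_apply, ← Complex.sq_norm] at hsq
    exact (sq_lt_one_iff₀ (norm_nonneg z)).mp hsq
  rcases mul_eq_zero.mp him with hreal | hvertex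
  · -- a real root of `p x = x² + b x + c` lies strictly between `-1` and `1`, since
    -- `p (±1) > 0` and the vertex `-b/2` lies in `(-1, 1)`
    rw [hreal] at hre ⊢
    have hlt : z.re < 1 := by
      by_contra! h
      nlinarith
    have hgt : -1 < z.re := by
      by_contra! h
      nlinarith
    nlinarith
  · -- a non-real root and its conjugate have product `c`
    nlinarith

theorem stmt_19_general {m : ℕ} (W : Matrix (Fin m) (Fin m) ℝ) (θ : ℝ)
    (hlow : (W + 1).PosDef) (hup : ((1 : Matrix (Fin m) (Fin m) ℝ) - W).PosSemidef)
    (hθ0 : 0 < θ) (hθ1 : θ ≤ 1/2)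
    (ω : ℝ) (hω : ∃ v : Fin m → ℝ, v ≠ 0 ∧ W *ᵥ v = ω • v)
    (lam : ℂ)
    (hroot : lam ^ 2 - ((1 : ℂ) + (ω : ℂ)) * lam + ((ω : ℂ) * (1 - (θ : ℂ)) + (θ : ℂ)) = 0) :
    (ω ≠ 1 → ‖lam‖ < 1) ∧ (ω = 1 → lam = 1) := by
  obtain ⟨v, hv, hWv⟩ := hω
  have hω_gt : -1 < ω := by
    have := hlow.pos_of_mulVec_eq_smul hv (μ := ω + 1) (by simp [add_mulVec, hWv, add_smul])
    linarith
  have hω_le : ω ≤ 1 := by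
    have := hup.nonneg_of_mulVec_eq_smul hv (μ := 1 - ω) (by simp [sub_mulVec, hWv, sub_smul])
    linarith
  refine ⟨fun hω1 => ?_, fun hω1 => ?_⟩
  · have hω_lt : ω < 1 := lt_of_le_of_ne hω_le hω1
    refine Complex.norm_lt_one_of_sq_add_mul_add_eq_zero (b := -(1 + ω)) (c := ω * (1 - θ) + θ)
      ?_ ?_ (by push_cast; linear_combination hroot)
    all_goals rw [abs_lt]; constructor <;> nlinarith
  · subst hω1
    have hsq : (lam - 1) ^ 2 = 0 := by
      push_cast at hroot
      linear_combination hroot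
    exact sub_eq_zero.mp (pow_eq_zero_iff two_ne_zero |>.mp hsq)

/-- Combined real/complex root case: for an eigenvalue ω ≠ 1 of W, both roots of
λ² - (1+ω)λ + (ω(1-θ)+θ) = 0 have modulus < 1; for ω = 1 the only root is λ = 1. -/
theorem stmt_19 {m : ℕ} (W : Matrix (Fin m) (Fin m) ℝ) (θ : ℝ)
    (hW : W.IsSymm)
    (hlow : (W + 1).PosDef) (hup : ((1 : Matrix (Fin m) (Fin m) ℝ) - W).PosSemidef)
    (hθ0 : 0 < θ) (hθ1 : θ ≤ 1/2)
    (V : Matrix (Fin m) (Fin m) ℝ)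
    (hV : V = θ • (1 : Matrix (Fin m) (Fin m) ℝ) + (1 - θ) • W)
    (ω : ℝ) (hω : ∃ v : Fin m → ℝ, v ≠ 0 ∧ W *ᵥ v = ω • v)
    (lam : ℂ)
    (hroot : lam ^ 2 - ((1 : ℂ) + (ω : ℂ)) * lam + ((ω : ℂ) * (1 - (θ : ℂ)) + (θ : ℂ)) = 0) :
    (ω ≠ 1 → ‖lam‖ < 1) ∧ (ω = 1 → lam = 1) :=
  stmt_19_general W θ hlow hup hθ0 hθ1 ω hω lam hroot
end
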